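/- arXiv:2405.18040 — 4 statements merged into one kernel-verified Lean document; each statement's English description precedes it below -/
import Mathlib

section
/- Let C be a random subset of {1,…,N} with inclusion probabilities p_i > 0 and joint probabilities p_{ij}, with probability matrix P defined by P(i,j) = p_{ij}. If v ∈ ℝ^N satisfies P − p pᵀ ⪯ Diag(p_1 v_1, …, p_N v_N), then for any vectors ζ_1,…,ζ_N ∈ ℝ^d and non-negative weights w_1,…,w_N summing to 1: E[‖Σ_{i∈C} w_i ζ_i / p_i − Σ_{i=1}^N w_i ζ_i‖²] ≤ Σ_{i=1}^N w_i² (v_i/p_i) ‖ζ_i‖². -/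
/-!
Put `a i = (w i / p i) • ζ i`, so that `∑ i, w i • ζ i = ∑ i, p i • a i` and the estimator's
deviation is `∑ i, (χ i - p i) • a i`, where `χ i` is the indicator of `i ∈ C`. Its mean squared
norm is the covariance form `∑ i j, (P i j - p i p j) ⟪a i, a j⟫`. By the Schur product theorem
the Loewner bound `P - p pᵀ ⪯ Diag(p ∘ v)` survives the entrywise product with the Gram matrix of
the `a i`, which bounds this form by `∑ i, p i v i ‖a i‖² = ∑ i, w i² (v i / p i) ‖ζ i‖²`.
-/

open Finset Matrix
open scoped InnerProductSpace

section

variable {ι Ω E : Type*} [Fintype ι] [Fintype Ω]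
  [NormedAddCommGroup E] [InnerProductSpace ℝ E]

lemma norm_sum_smul_sq (c : ι → ℝ) (a : ι → E) :
    ‖∑ i, c i • a i‖ ^ 2 = ∑ i, ∑ j, c i * c j * ⟪a i, a j⟫_ℝ := by
  rw [← real_inner_self_eq_norm_sq, sum_inner]
  simp_rw [inner_sum, real_inner_smul_left, real_inner_smul_right, mul_assoc]

lemma sum_mul_sub_mean_mul_sub_mean {μ : Ω → ℝ} (hμ : ∑ ω, μ ω = 1) (X Y : Ω → ℝ) :
    ∑ ω, μ ω * ((X ω - ∑ ω', μ ω' * X ω') * (Y ω - ∑ ω', μ ω' * Y ω'))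
      = ∑ ω, μ ω * (X ω * Y ω) - (∑ ω, μ ω * X ω) * ∑ ω, μ ω * Y ω := by
  have expand : ∀ ω, μ ω * ((X ω - ∑ ω', μ ω' * X ω') * (Y ω - ∑ ω', μ ω' * Y ω'))
      = μ ω * (X ω * Y ω) - (∑ ω', μ ω' * Y ω') * (μ ω * X ω)
        - (∑ ω', μ ω' * X ω') * (μ ω * Y ω)
        + (∑ ω', μ ω' * X ω') * (∑ ω', μ ω' * Y ω') * μ ω := fun ω => by ring
  simp only [expand, sum_add_distrib, sum_sub_distrib, ← mul_sum, hμ]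
  ring

lemma sum_mul_norm_sum_sub_mean_smul_sq {μ : Ω → ℝ} (hμ : ∑ ω, μ ω = 1) (X : ι → Ω → ℝ)
    {m : ι → ℝ} (hm : ∀ i, m i = ∑ ω, μ ω * X i ω) (a : ι → E) :
    ∑ ω, μ ω * ‖∑ i, (X i ω - m i) • a i‖ ^ 2
      = ∑ i, ∑ j, (∑ ω, μ ω * (X i ω * X j ω) - m i * m j) * ⟪a i, a j⟫_ℝ := by
  simp_rw [hm, ← sum_mul_sub_mean_mul_sub_mean hμ, norm_sum_smul_sq, mul_sum, sum_mul]
  rw [sum_comm]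
  refine sum_congr rfl fun i _ => ?_
  rw [sum_comm]
  refine sum_congr rfl fun j _ => sum_congr rfl fun ω _ => ?_
  ring

lemma Matrix.PosSemidef.sum_mul_inner_nonneg {M : Matrix ι ι ℝ} (hM : M.PosSemidef) (a : ι → E) :
    0 ≤ ∑ i, ∑ j, M i j * ⟪a i, a j⟫_ℝ := by
  simpa [dotProduct, mulVec, mul_sum] using
    (hM.hadamard (posSemidef_gram ℝ a)).dotProduct_mulVec_nonneg (fun _ => 1)

lemma sum_mul_inner_le_of_posSemidef_sub {A B : Matrix ι ι ℝ} (h : (B - A).PosSemidef)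
    (a : ι → E) :
    ∑ i, ∑ j, A i j * ⟪a i, a j⟫_ℝ ≤ ∑ i, ∑ j, B i j * ⟪a i, a j⟫_ℝ := by
  have := h.sum_mul_inner_nonneg a
  simp only [Matrix.sub_apply, sub_mul, sum_sub_distrib] at this
  linarith

lemma sum_diagonal_mul_inner [DecidableEq ι] (c : ι → ℝ) (a : ι → E) :
    ∑ i, ∑ j, diagonal c i j * ⟪a i, a j⟫_ℝ = ∑ i, c i * ‖a i‖ ^ 2 := by
  simp [diagonal_apply, ite_mul]

lemma sum_mem_sub_sum_smul_eq_sum_indicator_sub_smul [DecidableEq ι] (s : Finset ι)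
    (p : ι → ℝ) (a : ι → E) :
    ∑ i ∈ s, a i - ∑ i, p i • a i = ∑ i, ((if i ∈ s then 1 else 0) - p i) • a i := by
  simp_rw [sub_smul, sum_sub_distrib, ite_smul, one_smul, zero_smul, sum_ite_mem, univ_inter]

end

theorem stmt_2_general {N d : ℕ} {Ω : Type*} [Fintype Ω] (μ : Ω → ℝ)
    (hμ1 : ∑ ω, μ ω = 1)
    (C : Ω → Finset (Fin N)) (p : Fin N → ℝ) (P : Matrix (Fin N) (Fin N) ℝ)
    (hp : ∀ i, p i = ∑ ω, μ ω * (if i ∈ C ω then (1 : ℝ) else 0))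
    (hP : ∀ i j, P i j = ∑ ω, μ ω * (if i ∈ C ω ∧ j ∈ C ω then (1 : ℝ) else 0))
    (hppos : ∀ i, 0 < p i)
    (v : Fin N → ℝ)
    (hLoewner :
      (Matrix.diagonal (fun i => p i * v i) - (P - Matrix.vecMulVec p p)).PosSemidef)
    (w : Fin N → ℝ)
    (ζ : Fin N → EuclideanSpace ℝ (Fin d)) :
    ∑ ω, μ ω * ‖(∑ i ∈ C ω, (w i / p i) • ζ i) - ∑ i, w i • ζ i‖ ^ 2
      ≤ ∑ i, w i ^ 2 * (v i / p i) * ‖ζ i‖ ^ 2 := by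
  obtain ⟨a, ha⟩ : ∃ a : Fin N → EuclideanSpace ℝ (Fin d), ∀ i, a i = (w i / p i) • ζ i :=
    ⟨_, fun _ => rfl⟩
  have hwa : ∀ i, w i • ζ i = p i • a i := fun i => by
    rw [ha, smul_smul, mul_div_cancel₀ _ (hppos i).ne']
  have hP' : ∀ i j, ∑ ω, μ ω * ((if i ∈ C ω then (1 : ℝ) else 0) * (if j ∈ C ω then 1 else 0))
      = P i j := fun i j => by
    simp_rw [hP, ite_zero_mul_ite_zero, one_mul]
  calc ∑ ω, μ ω * ‖(∑ i ∈ C ω, (w i / p i) • ζ i) - ∑ i, w i • ζ i‖ ^ 2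
      = ∑ ω, μ ω * ‖∑ i, ((if i ∈ C ω then 1 else 0) - p i) • a i‖ ^ 2 := by
        simp_rw [← ha, hwa, sum_mem_sub_sum_smul_eq_sum_indicator_sub_smul]
    _ = ∑ i, ∑ j, (P i j - p i * p j) * ⟪a i, a j⟫_ℝ := by
        rw [sum_mul_norm_sum_sub_mean_smul_sq hμ1 _ hp]
        exact sum_congr rfl fun i _ => sum_congr rfl fun j _ => by rw [hP']
    _ ≤ ∑ i, ∑ j, diagonal (fun i => p i * v i) i j * ⟪a i, a j⟫_ℝ :=
        sum_mul_inner_le_of_posSemidef_sub hLoewner a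
    _ = ∑ i, w i ^ 2 * (v i / p i) * ‖ζ i‖ ^ 2 := by
        rw [sum_diagonal_mul_inner]
        refine sum_congr rfl fun i _ => ?_
        rw [ha, norm_smul, mul_pow, Real.norm_eq_abs, sq_abs]
        field_simp [(hppos i).ne']

/-- Partial-participation variance lemma. If the probability matrix `P`
(with entries `p_{ij}`, diagonal `p_i`) satisfies `P − p pᵀ ⪯ Diag(p ∘ v)`, then for any
vectors `ζ i` and non-negative weights `w i` summing to `1`,
`E[‖∑_{i∈C} w i • ζ i / p i − ∑ i w i • ζ i‖²] ≤ ∑ i, w i ^ 2 * (v i / p i) * ‖ζ i‖²`. -/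
theorem stmt_2 {N d : ℕ} {Ω : Type*} [Fintype Ω] (μ : Ω → ℝ)
    (hμ0 : ∀ ω, 0 ≤ μ ω) (hμ1 : ∑ ω, μ ω = 1)
    (C : Ω → Finset (Fin N)) (p : Fin N → ℝ) (P : Matrix (Fin N) (Fin N) ℝ)
    (hp : ∀ i, p i = ∑ ω, μ ω * (if i ∈ C ω then (1 : ℝ) else 0))
    (hP : ∀ i j, P i j = ∑ ω, μ ω * (if i ∈ C ω ∧ j ∈ C ω then (1 : ℝ) else 0))
    (hppos : ∀ i, 0 < p i)
    (v : Fin N → ℝ)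
    (hLoewner :
      (Matrix.diagonal (fun i => p i * v i) - (P - Matrix.vecMulVec p p)).PosSemidef)
    (w : Fin N → ℝ) (hw0 : ∀ i, 0 ≤ w i) (hw1 : ∑ i, w i = 1)
    (ζ : Fin N → EuclideanSpace ℝ (Fin d)) :
    ∑ ω, μ ω * ‖(∑ i ∈ C ω, (w i / p i) • ζ i) - ∑ i, w i • ζ i‖ ^ 2
      ≤ ∑ i, w i ^ 2 * (v i / p i) * ‖ζ i‖ ^ 2 :=
  stmt_2_general μ hμ1 C p P hp hP hppos v hLoewner w ζ
end

section
/- For positive reals a_1,…,a_N, the function f(p) = Σ_{i=1}^N a_i²/p_i is convex on (0,1]^N, and any minimizer of f subject to Σ_i p_i = m and 0 < p_i ≤ 1 satisfies: for all i, j with p_i < 1 and p_j < 1, a_i/p_i = a_j/p_j (i.e., unconstrained coordinates have p_i proportional to a_i). -/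
open Finset

/-- `f p = ∑ i, a i ^ 2 / p i` is convex on `(0,1]^N`, and any minimizer of
`f` subject to `∑ p i = m`, `0 < p i ≤ 1` satisfies `a i / p i = a j / p j` on all
coordinates where the box constraint `p i ≤ 1` is inactive. -/
theorem stmt_5 {N : ℕ} (a : Fin N → ℝ) (ha : ∀ i, 0 < a i) (m : ℝ) :
    ConvexOn ℝ {p : Fin N → ℝ | ∀ i, 0 < p i ∧ p i ≤ 1}
      (fun p => ∑ i, a i ^ 2 / p i) ∧
    (∀ p : Fin N → ℝ, (∀ i, 0 < p i ∧ p i ≤ 1) → (∑ i, p i = m) →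
      (∀ q : Fin N → ℝ, (∀ i, 0 < q i ∧ q i ≤ 1) → (∑ i, q i = m) →
        (∑ i, a i ^ 2 / p i) ≤ ∑ i, a i ^ 2 / q i) →
      ∀ i j, p i < 1 → p j < 1 → a i / p i = a j / p j) := by
  have hconvset : Convex ℝ {p : Fin N → ℝ | ∀ i, 0 < p i ∧ p i ≤ 1} := by
    intro x hx y hy c d hc hd hcd i
    have hx1 := (hx i).1; have hx2 := (hx i).2
    have hy1 := (hy i).1; have hy2 := (hy i).2
    have hxy : (c • x + d • y) i = c * x i + d * y i := rfl
    constructor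
    · rw [hxy]
      rcases hc.lt_or_eq with h | h
      · nlinarith
      · have : d = 1 := by linarith
        nlinarith
    · rw [hxy]; nlinarith
  constructor
  · -- convexity
    have key : ∀ i : Fin N, ConvexOn ℝ {p : Fin N → ℝ | ∀ k, 0 < p k ∧ p k ≤ 1}
        (fun p => a i ^ 2 / p i) := by
      intro i
      have h1 : ConvexOn ℝ (Set.Ioi (0:ℝ)) fun x : ℝ => x ^ (-1:ℤ) := convexOn_zpow (-1)
      have h2 := (h1.smul (by positivity : (0:ℝ) ≤ a i ^ 2)).comp_affineMap
        ((LinearMap.proj i : (Fin N → ℝ) →ₗ[ℝ] ℝ).toAffineMap)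
      refine (h2.subset ?_ hconvset).congr ?_
      · intro p hp; exact (hp i).1
      · intro p hp; simp [div_eq_mul_inv]
    have main : ∀ t : Finset (Fin N),
        ConvexOn ℝ {p : Fin N → ℝ | ∀ k, 0 < p k ∧ p k ≤ 1}
          (fun p => ∑ i ∈ t, a i ^ 2 / p i) := by
      intro t
      induction t using Finset.cons_induction with
      | empty => simpa using convexOn_const 0 hconvset
      | cons i t hit ih =>
        have := (key i).add ih
        refine this.congr fun p hp => ?_
        simp [Finset.sum_insert hit]
    exact main Finset.univ
  · -- minimizer proportionality
    intro p hp hsum hmin i j hpi1 hpj1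
    -- helper: can't have a strictly larger ratio at an unconstrained coordinate
    have claim : ∀ i j : Fin N, i ≠ j → p i < 1 → a j / p j < a i / p i → False := by
      intro i j hij hpi1 hlt
      have hpi := (hp i).1
      have hpj := (hp j).1
      have hratio : a j * p i < a i * p j := by
        rwa [div_lt_div_iff₀ hpj hpi] at hlt
      obtain ⟨ε, hε, hε1, hε2, hkey⟩ :
          ∃ ε : ℝ, 0 < ε ∧ ε ≤ 1 - p i ∧ ε ≤ p j / 2 ∧
            ε * (a j ^ 2 * p i + a i ^ 2 * p j) <
              a i ^ 2 * p j ^ 2 - a j ^ 2 * p i ^ 2 := by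
        have hD : 0 < a i ^ 2 * p j ^ 2 - a j ^ 2 * p i ^ 2 := by
          have h1 : 0 < a j * p i := mul_pos (ha j) hpi
          nlinarith
        have hS : 0 < a j ^ 2 * p i + a i ^ 2 * p j := by
          have h1 := ha i; have h2 := ha j; positivity
        refine ⟨min (min (1 - p i) (p j / 2))
          ((a i ^ 2 * p j ^ 2 - a j ^ 2 * p i ^ 2) / (2 * (a j ^ 2 * p i + a i ^ 2 * p j))),
          lt_min (lt_min (by linarith) (by linarith)) (div_pos hD (by linarith)),
          le_trans (min_le_left _ _) (min_le_left _ _),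
          le_trans (min_le_left _ _) (min_le_right _ _), ?_⟩
        have h3 := min_le_right (min (1 - p i) (p j / 2))
          ((a i ^ 2 * p j ^ 2 - a j ^ 2 * p i ^ 2) / (2 * (a j ^ 2 * p i + a i ^ 2 * p j)))
        set e := min (min (1 - p i) (p j / 2))
          ((a i ^ 2 * p j ^ 2 - a j ^ 2 * p i ^ 2) / (2 * (a j ^ 2 * p i + a i ^ 2 * p j)))
        rw [le_div_iff₀ (by linarith)] at h3
        nlinarith
      have hpjε : 0 < p j - ε := by linarith
      -- the perturbed point
      set q : Fin N → ℝ := fun k =>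
        p k + (if k = i then ε else 0) - (if k = j then ε else 0) with hqdef
      have hqi : q i = p i + ε := by simp [hqdef, hij]
      have hqj : q j = p j - ε := by simp [hqdef, hij.symm]
      have hqk : ∀ k, k ≠ i → k ≠ j → q k = p k := by
        intro k h1 h2; simp [hqdef, h1, h2]
      have hqfeas : ∀ k, 0 < q k ∧ q k ≤ 1 := by
        intro k
        by_cases h1 : k = i
        · subst h1; rw [hqi]; constructor <;> [positivity; linarith]
        · by_cases h2 : k = j
          · subst h2; rw [hqj]; exact ⟨hpjε, by linarith [(hp k).2]⟩
          · rw [hqk k h1 h2]; exact hp k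
      have hqsum : ∑ k, q k = m := by
        simp only [hqdef, Finset.sum_sub_distrib, Finset.sum_add_distrib,
          Finset.sum_ite_eq', Finset.mem_univ, if_true, hsum]
        ring
      have hle := hmin q hqfeas hqsum
      -- compute the difference of sums
      have hdiff : ∑ k, a k ^ 2 / q k - ∑ k, a k ^ 2 / p k =
          (a i ^ 2 / (p i + ε) - a i ^ 2 / p i) +
          (a j ^ 2 / (p j - ε) - a j ^ 2 / p j) := by
        rw [← Finset.sum_sub_distrib]
        rw [← Finset.sum_subset (Finset.subset_univ ({i, j} : Finset (Fin N)))
          (fun k _ hk => ?_)]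
        · rw [Finset.sum_pair hij, hqi, hqj]
        · have h1 : k ≠ i := fun h => hk (by simp [h])
          have h2 : k ≠ j := fun h => hk (by simp [h])
          rw [hqk k h1 h2]; ring
      have hcore : a i ^ 2 / (p i + ε) + a j ^ 2 / (p j - ε) <
          a i ^ 2 / p i + a j ^ 2 / p j := by
        rw [div_add_div _ _ (by positivity) (by positivity),
          div_add_div _ _ (by positivity) (by positivity),
          div_lt_div_iff₀ (by positivity) (by positivity)]
        have hai := ha i; have haj := ha j
        nlinarith [mul_pos hpi hpj, sq_nonneg ε, mul_pos hε (mul_pos hpi hpj)]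
      linarith
    by_contra hne
    by_cases hij : i = j
    · exact hne (by rw [hij])
    · rcases lt_or_gt_of_ne hne with h | h
      · exact claim j i (Ne.symm hij) hpj1 h
      · exact claim i j hij hpi1 h
end

section
/- Let (x_t) be a nonnegative real sequence with x_0 = 0 satisfying x_t ≤ b·x_{t−1} + c·d_{t−1}, where b, c ≥ 0, and (d_t) is a nonnegative sequence with d_0 = 0 and d_t ≤ Σ_{i=0}^{t−1} a^{t−1−i} g_i for constants a ≥ 0 and nonnegative reals g_0, g_1, …. If a ≠ b, then x_T ≤ c · Σ_{j=0}^{T−2} ((a^{T−1−j} − b^{T−1−j})/(a − b)) g_j for all T ≥ 2. -/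
/-- Abstract core of Theorem 1 of Fast-FedUL: if `x t ≤ b * x (t-1) + c * d (t-1)`
with `x 0 = 0`, and `d t ≤ ∑_{i<t} a^(t-1-i) g i` with `d 0 = 0`, then for `T ≥ 2` and `a ≠ b`,
`x T ≤ c * ∑_{j=0}^{T-2} ((a^(T-1-j) − b^(T-1-j))/(a − b)) * g j`. -/
theorem stmt_8 (x d g : ℕ → ℝ) (a b c : ℝ)
    (ha : 0 ≤ a) (hb : 0 ≤ b) (hc : 0 ≤ c) (hab : a ≠ b)
    (hx0 : x 0 = 0) (hxnn : ∀ t, 0 ≤ x t) (hdnn : ∀ t, 0 ≤ d t) (hgnn : ∀ i, 0 ≤ g i)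
    (hd0 : d 0 = 0)
    (hxrec : ∀ t : ℕ, 1 ≤ t → x t ≤ b * x (t - 1) + c * d (t - 1))
    (hdbound : ∀ t : ℕ, 1 ≤ t → d t ≤ ∑ i ∈ Finset.range t, a ^ (t - 1 - i) * g i) :
    ∀ T : ℕ, 2 ≤ T →
      x T ≤ c * ∑ j ∈ Finset.range (T - 1),
        ((a ^ (T - 1 - j) - b ^ (T - 1 - j)) / (a - b)) * g j := by
  have hne : a - b ≠ 0 := sub_ne_zero.mpr hab
  have hf : ∀ k : ℕ,
      (a ^ (k + 1) - b ^ (k + 1)) / (a - b)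
        = b * ((a ^ k - b ^ k) / (a - b)) + a ^ k := by
    intro k
    field_simp
    ring
  have key : ∀ T : ℕ, 1 ≤ T →
      x T ≤ c * ∑ j ∈ Finset.range (T - 1),
        ((a ^ (T - 1 - j) - b ^ (T - 1 - j)) / (a - b)) * g j := by
    intro T hT
    induction T, hT using Nat.le_induction with
    | base =>
      simp only [Nat.sub_self, Finset.range_zero, Finset.sum_empty, mul_zero]
      calc x 1 ≤ b * x 0 + c * d 0 := by simpa using hxrec 1 le_rfl
        _ = 0 := by rw [hx0, hd0]; ring
    | succ n hn ih =>
      obtain ⟨m, rfl⟩ := Nat.exists_eq_succ_of_ne_zero (by omega : n ≠ 0)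
      have h1 : x (m + 1 + 1) ≤ b * x (m + 1) + c * d (m + 1) := by
        simpa using hxrec (m + 1 + 1) (by omega)
      have h2 : d (m + 1) ≤ ∑ i ∈ Finset.range (m + 1), a ^ (m + 1 - 1 - i) * g i :=
        hdbound (m + 1) hn
      have h3 : x (m + 1 + 1) ≤
          c * (b * (∑ j ∈ Finset.range (m + 1 - 1),
              ((a ^ (m + 1 - 1 - j) - b ^ (m + 1 - 1 - j)) / (a - b)) * g j)
            + ∑ i ∈ Finset.range (m + 1), a ^ (m + 1 - 1 - i) * g i) := by
        calc x (m + 1 + 1) ≤ b * x (m + 1) + c * d (m + 1) := h1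
          _ ≤ b * (c * ∑ j ∈ Finset.range (m + 1 - 1),
                ((a ^ (m + 1 - 1 - j) - b ^ (m + 1 - 1 - j)) / (a - b)) * g j)
              + c * ∑ i ∈ Finset.range (m + 1), a ^ (m + 1 - 1 - i) * g i :=
            add_le_add (mul_le_mul_of_nonneg_left ih hb)
              (mul_le_mul_of_nonneg_left h2 hc)
          _ = _ := by ring
      refine h3.trans_eq ?_
      congr 1
      simp only [Nat.add_sub_cancel]
      -- goal: b * ∑_{j<m} f(m-j) g j + ∑_{i<m+1} a^(m-i) g i = ∑_{j<m+1} f(m+1-j) g j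
      rw [Finset.mul_sum, Finset.sum_range_succ, Finset.sum_range_succ]
      have hsum : (∑ j ∈ Finset.range m,
            b * (((a ^ (m - j) - b ^ (m - j)) / (a - b)) * g j))
          + (∑ i ∈ Finset.range m, a ^ (m - i) * g i)
          = ∑ j ∈ Finset.range m,
            ((a ^ (m + 1 - j) - b ^ (m + 1 - j)) / (a - b)) * g j := by
        rw [← Finset.sum_add_distrib]
        refine Finset.sum_congr rfl ?_
        intro j hj
        have hj' : j < m := Finset.mem_range.mp hj
        have hk : m + 1 - j = (m - j) + 1 := by omega
        rw [hk, hf (m - j)]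
        ring
      have e1 : m - m = 0 := Nat.sub_self m
      have e2 : m + 1 - m = 1 := by omega
      rw [e1, e2, pow_zero, pow_one, pow_one, div_self hne]
      linarith [hsum]
  intro T hT
  exact key T (by omega)
end

section
/- In binary classification (r ∈ {0,1}), let u_c = E[L(x)_{0c}] < 0 and v_c = E[L(x̃)_{0c}] > 0 for each feature index c, and suppose ξ·v_c + (ξ+2)·u_c > 0 for all c, where ξ > 0. Define A = 2η² Σ_c u_c² and B = (2η²/(1+ξ)²) Σ_c (u_c + ξ v_c)². Then B > A. -/
/-- If `u c < 0`, `v c > 0` and `ξ v c + (ξ+2) u c > 0` for all feature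
indices `c`, with `ξ > 0` and learning rate `η > 0`, then the malicious client's squared
update norm `B = (2η²/(1+ξ)²) ∑ c (u c + ξ v c)²` exceeds the benign one
`A = 2η² ∑ c u c²`. -/
theorem stmt_16 {ι : Type*} [Fintype ι] [Nonempty ι] (u v : ι → ℝ) (ξ η : ℝ)
    (hξ : 0 < ξ) (hη : 0 < η)
    (hu : ∀ c, u c < 0) (hv : ∀ c, 0 < v c)
    (hcond : ∀ c, 0 < ξ * v c + (ξ + 2) * u c) :
    2 * η ^ 2 * ∑ c, (u c) ^ 2
      < (2 * η ^ 2 / (1 + ξ) ^ 2) * ∑ c, (u c + ξ * v c) ^ 2 := by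
  have h1 : (0:ℝ) < (1 + ξ) ^ 2 := by positivity
  have key : ∀ c, (1 + ξ) ^ 2 * (u c) ^ 2 < (u c + ξ * v c) ^ 2 := by
    intro c
    have hd : 0 < ξ * (v c - u c) * (ξ * v c + (ξ + 2) * u c) := by
      have := hcond c
      have hvu : 0 < v c - u c := by linarith [hu c, hv c]
      positivity
    nlinarith [hd]
  have hsum : (1 + ξ) ^ 2 * ∑ c, (u c) ^ 2 < ∑ c, (u c + ξ * v c) ^ 2 := by
    rw [Finset.mul_sum]
    exact Finset.sum_lt_sum_of_nonempty Finset.univ_nonempty (fun c _ => key c)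
  have h2 : (0:ℝ) < 2 * η ^ 2 := by positivity
  rw [div_mul_eq_mul_div, lt_div_iff₀ h1]
  nlinarith [hsum]
end
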